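/- Additive reciprocity: for coprime positive integers q₁ and q₂ and any integer n, e(n·q̄₂/q₁) = e(−n·q̄₁/q₂)·e(n/(q₁q₂)), where q̄₂ is an inverse of q₂ mod q₁ and q̄₁ is an inverse of q₁ mod q₂, and e(t) = exp(2πit). -/

import Mathlib

noncomputable def e (x : ℝ) : ℂ := Complex.exp (2 * Real.pi * Complex.I * x)

lemma e_add (x y : ℝ) : e (x + y) = e x * e y := by
  simp [e, ← Complex.exp_add]; ring_nf

lemma e_int_add (x : ℝ) (m : ℤ) : e (x + m) = e x := by
  rw [e_add]
  have : e (m : ℝ) = 1 := by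
    simp [e]
    rw [mul_comm]
    exact Complex.exp_int_mul_two_pi_mul_I m
  simp [this]

theorem stmt6 (q₁ q₂ : ℕ) (hq₁ : 0 < q₁) (hq₂ : 0 < q₂) (hco : Nat.Coprime q₁ q₂)
    (n t₁ t₂ : ℤ) (ht₂ : (q₂ : ℤ) * t₂ ≡ 1 [ZMOD q₁]) (ht₁ : (q₁ : ℤ) * t₁ ≡ 1 [ZMOD q₂]) :
    e ((n * t₂ : ℤ) / (q₁ : ℝ)) = e ((-(n * t₁) : ℤ) / (q₂ : ℝ)) * e ((n : ℝ) / (q₁ * q₂ : ℝ)) := by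
  have h1 : (q₁ : ℤ) ∣ (q₂ * t₂ + q₁ * t₁ - 1) := by
    have h2 : (q₁ : ℤ) ∣ ((q₂ : ℤ) * t₂ - 1) := Int.ModEq.dvd ht₂.symm
    have : (q₂ * t₂ + q₁ * t₁ - 1 : ℤ) = (q₂ * t₂ - 1) + q₁ * t₁ := by ring
    rw [this]
    exact dvd_add h2 ⟨t₁, rfl⟩
  have h2 : (q₂ : ℤ) ∣ (q₂ * t₂ + q₁ * t₁ - 1) := by
    have h2 : (q₂ : ℤ) ∣ ((q₁ : ℤ) * t₁ - 1) := Int.ModEq.dvd ht₁.symm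
    have : (q₂ * t₂ + q₁ * t₁ - 1 : ℤ) = (q₁ * t₁ - 1) + q₂ * t₂ := by ring
    rw [this]
    exact dvd_add h2 ⟨t₂, rfl⟩
  have hcod : IsCoprime (q₁ : ℤ) (q₂ : ℤ) := Int.isCoprime_iff_gcd_eq_one.mpr hco
  obtain ⟨k, hk⟩ := hcod.mul_dvd h1 h2
  have hq1 : (q₁ : ℝ) ≠ 0 := Nat.cast_ne_zero.mpr hq₁.ne'
  have hq2 : (q₂ : ℝ) ≠ 0 := Nat.cast_ne_zero.mpr hq₂.ne'
  have key : ((n * t₂ : ℤ) : ℝ) / (q₁ : ℝ) =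
      (((-(n * t₁) : ℤ) : ℝ) / (q₂ : ℝ) + (n : ℝ) / (q₁ * q₂ : ℝ)) + ((n * k : ℤ) : ℝ) := by
    have hkR : ((q₂ : ℝ) * t₂ + q₁ * t₁ - 1) = (q₁ * q₂ : ℝ) * k := by
      exact_mod_cast congrArg (Int.cast : ℤ → ℝ) hk
    field_simp
    push_cast
    linear_combination (n : ℝ) * hkR
  rw [key, e_int_add, e_add]
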